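/- Let q be an element of a commutative ring. For every integer k ≥ 0, (1 + q) · T_k(−q, q) = 1 + q^{2k+1}. -/

import Mathlib

/-- The polynomials `T_k(t,q)` defined by `T_0 = 1` and, for `k ≥ 1`,
`T_k = T_{k-1} + (1+t)(-q)^{k²} + (1-t²) ∑_{i=1}^{k-1} (-q)^{k²-i²} T_{i-1}`
(below the sum is reindexed by `i ↦ i+1`). -/
def T {R : Type*} [CommRing R] (t q : R) : ℕ → R
  | 0 => 1
  | (k+1) => T t q k + (1 + t) * (-q) ^ ((k+1)^2) +
      (1 - t^2) * ∑ i ∈ (Finset.range k).attach,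
        (-q) ^ ((k+1)^2 - (i.1+1)^2) * T t q i.1
decreasing_by
  · exact Nat.lt_succ_self k
  · exact Nat.lt_succ_of_lt (Finset.mem_range.mp i.2)

/-- `f n h` with `f 0 0 = 1`, `f 0 h = 0` for `h ≥ 1`, `f n h = 0` for `h < 0`, and
`f n h = (1-q^h) f (n-1) (h-1) + (1-t q^{h+1}) f (n-1) (h+1)`; at `h = 0` the first
term vanishes since `1 - q^0 = 0`. -/
def f {R : Type*} [CommRing R] (t q : R) : ℕ → ℕ → R
  | 0, h => if h = 0 then 1 else 0
  | (n+1), 0 => (1 - t * q) * f t q n 1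
  | (n+1), (h+1) => (1 - q^(h+1)) * f t q n h + (1 - t * q^(h+2)) * f t q n (h+2)

/-- `Ẽ_n(t,q) = f(2n,0)`, which is `(1-q)^{2n}` times the `(t,q)`-Euler number. -/
def Etilde {R : Type*} [CommRing R] (t q : R) (n : ℕ) : R := f t q (2*n) 0

/-- Binomial coefficient with integer lower index, `0` when the lower index is negative. -/
def binom (n : ℕ) (m : ℤ) : ℤ := if 0 ≤ m then (n.choose m.toNat : ℤ) else 0

/-- q-Pochhammer symbol `(a;q)_n = ∏_{j=0}^{n-1} (1 - a q^j)`. -/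
def qPoch {K : Type*} [CommRing K] (a q : K) (n : ℕ) : K :=
  ∏ j ∈ Finset.range n, (1 - a * q ^ j)

/-- Gaussian binomial coefficient `[n choose k]_q = (q;q)_n / ((q;q)_k (q;q)_{n-k})`,
equal to `0` whenever `k < 0` or `k > n`. -/
def gauss {K : Type*} [Field K] (q : K) (n k : ℤ) : K :=
  if 0 ≤ k ∧ k ≤ n then
    qPoch q q n.toNat / (qPoch q q k.toNat * qPoch q q (n - k).toNat)
  else 0

/-- Number of distinct (positive) part sizes of the partition encoded by an
antitone function `Fin m → Fin (n+1)`. -/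
def distCard {m n : ℕ} (g : Fin m → Fin (n+1)) : ℕ :=
  ((Finset.univ.image fun i => ((g i : ℕ))).erase 0).card

/-- `∑_{λ ⊆ B(m,n)} x^{dist(λ)} q^{|λ|}`: partitions in the `m × n` box are encoded
as antitone functions `Fin m → Fin (n+1)`. -/
def boxSum {R : Type*} [CommRing R] (x q : R) (m n : ℕ) : R :=
  ∑ g ∈ Finset.univ.filter (fun g : Fin m → Fin (n+1) => ∀ i j : Fin m, i ≤ j → g j ≤ g i),
    x ^ distCard g * q ^ (∑ i, (g i : ℕ))

open Finset

lemma T_succ {R : Type*} [CommRing R] (t q : R) (k : ℕ) :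
    T t q (k + 1) = T t q k + (1 + t) * (-q) ^ ((k + 1) ^ 2) +
      (1 - t ^ 2) * ∑ i ∈ range k, (-q) ^ ((k + 1) ^ 2 - (i + 1) ^ 2) * T t q i := by
  rw [T, sum_attach (range k) fun i => (-q) ^ ((k + 1) ^ 2 - (i + 1) ^ 2) * T t q i]

lemma pow_sub_sq_mul_pow_two_mul_add_one {M : Type*} [Monoid M] (x : M) {j n : ℕ}
    (h : j < n) : x ^ (n ^ 2 - (j + 1) ^ 2) * x ^ (2 * j + 1) = x ^ (n ^ 2 - j ^ 2) := by
  have hle : (j + 1) ^ 2 ≤ n ^ 2 := Nat.pow_le_pow_left h 2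
  have hsq : (j + 1) ^ 2 = j ^ 2 + 2 * j + 1 := by ring
  rw [← pow_add]
  congr 1
  omega

/-- Since `(1 + q) a_i = 1 - (-q) ^ (2i+1)`, each weighted summand is a difference of
consecutive values of `j ↦ (-q) ^ ((m+1)² - j²)`, so the sum telescopes. -/
lemma one_add_mul_sum_neg_pow_sub_sq {R : Type*} [CommRing R] (q : R) (a : ℕ → R) (m : ℕ)
    (ha : ∀ i < m, (1 + q) * a i = 1 + q ^ (2 * i + 1)) :
    (1 + q) * ∑ i ∈ range m, (-q) ^ ((m + 1) ^ 2 - (i + 1) ^ 2) * a i =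
      (-q) ^ (2 * m + 1) - (-q) ^ ((m + 1) ^ 2) := by
  have hterm : ∀ i ∈ range m, (1 + q) * ((-q) ^ ((m + 1) ^ 2 - (i + 1) ^ 2) * a i) =
      (-q) ^ ((m + 1) ^ 2 - (i + 1) ^ 2) - (-q) ^ ((m + 1) ^ 2 - i ^ 2) := by
    intro i hi
    have him : i < m := mem_range.1 hi
    rw [← pow_sub_sq_mul_pow_two_mul_add_one (-q) (Nat.lt_succ_of_lt him), mul_left_comm,
      ha i him, Odd.neg_pow ⟨i, rfl⟩]
    ring
  have hlast : (m + 1) ^ 2 - m ^ 2 = 2 * m + 1 := by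
    have : (m + 1) ^ 2 = m ^ 2 + 2 * m + 1 := by ring
    omega
  rw [mul_sum, sum_congr rfl hterm,
    sum_range_sub (fun j => (-q) ^ ((m + 1) ^ 2 - j ^ 2)) m, hlast]
  simp

theorem stmt_10 {R : Type*} [CommRing R] (q : R) (k : ℕ) :
    (1 + q) * T (-q) q k = 1 + q^(2*k+1) := by
  induction k using Nat.strong_induction_on with
  | _ k ih =>
  cases k with
  | zero => simp [T]
  | succ m =>
    have hsum := one_add_mul_sum_neg_pow_sub_sq q (T (-q) q) m fun i hi => ih i (by omega)
    rw [Odd.neg_pow ⟨m, rfl⟩] at hsum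
    rw [T_succ]
    linear_combination ih m (by omega) + (1 - q ^ 2) * hsum
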